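/- arXiv:1001.1531 — 4 statements merged into one kernel-verified Lean document; each statement's English description precedes it below -/
import Mathlib

section
/- Let Q and Q' be alternating quivers with underlying Dynkin graphs and ε(i)=+1 for sources, -1 for sinks. For σ,σ' ∈ {+,-}, let μ_{σ,σ'} be the composition of mutations of Q□Q' at all vertices (i,i') with ε(i)=σ and ε(i')=σ' (there are no arrows between any two such vertices, so the order is irrelevant). Then μ_{+,+}∘μ_{-,-} transforms Q□Q' into its opposite quiver (Q□Q')^{op}, and likewise μ_{-,+}∘μ_{+,-} transforms Q□Q' into (Q□Q')^{op}. Consequently μ_□ = μ_{-,-}∘μ_{+,+}∘μ_{-,+}∘μ_{+,-} transforms Q□Q' into itself. -/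
open scoped Classical

def isSource {V : Type*} (q : V → V → ℕ) (i : V) : Prop := ∀ j, q j i = 0

def isSink {V : Type*} (q : V → V → ℕ) (i : V) : Prop := ∀ j, q i j = 0

def Alternating {V : Type*} (q : V → V → ℕ) : Prop := ∀ i, isSource q i ∨ isSink q i

/-- Fomin–Zelevinsky quiver mutation at the vertex `k`. -/
noncomputable def quiverMutation {V : Type*} (q : V → V → ℕ) (k : V) : V → V → ℕ :=
  fun i j =>
    if i = k ∨ j = k then q j i
    else (q i j + q i k * q k j) - (q j i + q j k * q k i)

noncomputable def tensorProd {V V' : Type*} (q : V → V → ℕ) (q' : V' → V' → ℕ) :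
    V × V' → V × V' → ℕ :=
  fun p r => (if p.2 = r.2 then q p.1 r.1 else 0) + (if p.1 = r.1 then q' p.2 r.2 else 0)

noncomputable def squareProd {V V' : Type*} (q : V → V → ℕ) (q' : V' → V' → ℕ) :
    V × V' → V × V' → ℕ :=
  fun p r =>
    (if p.2 = r.2 then (if isSource q' p.2 then q r.1 p.1 else q p.1 r.1) else 0) +
      (if p.1 = r.1 then (if isSink q p.1 then q' r.2 p.2 else q' p.2 r.2) else 0)

/-- The underlying graph of a quiver given by arrow counts. -/
def symGraph {V : Type*} (q : V → V → ℕ) : SimpleGraph V where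
  Adj i j := i ≠ j ∧ 0 < q i j + q j i
  symm := by
    constructor
    intro i j h
    exact ⟨h.1.symm, by omega⟩
  loopless := ⟨fun i h => h.1 rfl⟩

/-- `ε(i) = +` if `i` is a source, `ε(i) = -` if `i` is a sink (`true` codes `+`). -/
def signClass {V : Type*} (q : V → V → ℕ) (i : V) (σ : Bool) : Prop :=
  isSource q i ↔ σ = true

/-- The set of vertices of `Q □ Q'` with `ε(i) = σ` and `ε(i') = σ'`. -/
def Mclass {V V' : Type*} (q : V → V → ℕ) (q' : V' → V' → ℕ) (σ σ' : Bool)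
    (p : V × V') : Prop :=
  signClass q p.1 σ ∧ signClass q' p.2 σ'

/-- `l` is an enumeration of the vertex class `M_{σ,σ'}`. -/
def Enum {V V' : Type*} (q : V → V → ℕ) (q' : V' → V' → ℕ) (σ σ' : Bool)
    (l : List (V × V')) : Prop :=
  l.Nodup ∧ ∀ p : V × V', p ∈ l ↔ Mclass q q' σ σ' p

/-!
Let `S` be `M_{+,+} ∪ M_{-,-}` or `M_{+,-} ∪ M_{-,+}`. Every arrow of `Q □ Q'` joins a vertex of
`S` to one outside `S`, so mutating at all of `S` reverses the arrows at `S` and, between two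
vertices `p, r ∉ S` (never joined by an arrow), creates one arrow `p → r` for each path
`p → k → r` through `S`, cancelled against the paths `r → k → p`. Such a path turns at `k`
(horizontal then vertical for `M_{+,+} ∪ M_{-,-}`, the other way round for `M_{+,-} ∪ M_{-,+}`),
so `k` is a corner of the rectangle spanned by `p` and `r`; since these rectangles commute, the
two kinds of paths are equally many and the result is `(Q □ Q')^{op}`. The last claim follows
because mutation commutes with taking the opposite quiver.
-/

open Finset

section Mutation

variable {W : Type*}

theorem quiverMutation_flip (B : W → W → ℕ) (k : W) :
    quiverMutation (flip B) k = flip (quiverMutation B k) := by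
  funext p r
  simp only [quiverMutation, flip, or_comm]
  split_ifs <;> ring_nf

theorem foldl_quiverMutation_flip (l : List W) (B : W → W → ℕ) :
    l.foldl quiverMutation (flip B) = flip (l.foldl quiverMutation B) := by
  induction l generalizing B with
  | nil => rfl
  | cons k l ih => simp only [List.foldl_cons, quiverMutation_flip, ih]

variable [DecidableEq W] {B : W → W → ℕ}

/-- Closed form of the composite of the mutations at the vertices of a set `S` with no arrows
inside it. -/
noncomputable def setMutation (B : W → W → ℕ) (S : Finset W) : W → W → ℕ := fun p r =>
  if p ∈ S ∨ r ∈ S then B r p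
  else (B p r + ∑ k ∈ S, B p k * B k r) - (B r p + ∑ k ∈ S, B r k * B k p)

theorem setMutation_empty (hB : ∀ p r, B p r = 0 ∨ B r p = 0) : setMutation B ∅ = B := by
  funext p r
  rcases hB p r with h | h <;> simp [setMutation, h]

theorem setMutation_apply_of_forall_eq_zero {S : Finset W} {k : W}
    (hB : ∀ p r, B p r = 0 ∨ B r p = 0) (hk : k ∉ S) (hSk : ∀ s ∈ S, B s k = 0 ∧ B k s = 0)
    (p : W) : setMutation B S p k = B p k ∧ setMutation B S k p = B k p := by
  by_cases hp : p ∈ S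
  · simp [setMutation, hp, hSk p hp]
  · have hsum₁ : ∑ s ∈ S, B p s * B s k = 0 := sum_eq_zero fun s hs => by simp [hSk s hs]
    have hsum₂ : ∑ s ∈ S, B k s * B s p = 0 := sum_eq_zero fun s hs => by simp [hSk s hs]
    simp only [setMutation, hp, hk, or_self, if_false, hsum₁, hsum₂, add_zero]
    rcases hB p k with h | h <;> simp [h]

theorem quiverMutation_setMutation {S : Finset W} {k : W} (hB : ∀ p r, B p r = 0 ∨ B r p = 0)
    (hk : k ∉ S) (hind : ∀ s ∈ insert k S, ∀ t ∈ insert k S, B s t = 0) :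
    quiverMutation (setMutation B S) k = setMutation B (insert k S) := by
  have hSk : ∀ s ∈ S, B s k = 0 ∧ B k s = 0 := fun s hs =>
    ⟨hind s (mem_insert_of_mem hs) k (mem_insert_self k S),
      hind k (mem_insert_self k S) s (mem_insert_of_mem hs)⟩
  have hG := setMutation_apply_of_forall_eq_zero hB hk hSk
  funext p r
  by_cases hpr : p = k ∨ r = k
  · have hmem : p ∈ insert k S ∨ r ∈ insert k S := by
      rcases hpr with rfl | rfl <;> simp
    rw [quiverMutation, if_pos hpr, show setMutation B (insert k S) p r = B r p from if_pos hmem]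
    rcases hpr with rfl | rfl
    · exact (hG r).1
    · exact (hG p).2
  · obtain ⟨hpk, hrk⟩ := not_or.mp hpr
    rw [quiverMutation, if_neg hpr, (hG p).1, (hG p).2, (hG r).1, (hG r).2]
    by_cases hS : p ∈ S ∨ r ∈ S
    · have hkpr : B p k * B k r = 0 ∧ B r k * B k p = 0 := by
        rcases hS with hp | hr
        · simp [(hSk p hp).1, (hSk p hp).2]
        · simp [(hSk r hr).1, (hSk r hr).2]
      have hS' : p ∈ insert k S ∨ r ∈ insert k S := by
        rcases hS with h | h <;> simp [h]
      simp only [setMutation, if_pos hS, if_pos hS', if_pos hS.symm, hkpr.1, hkpr.2, add_zero]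
      rcases hB p r with h | h <;> simp [h]
    · have hS' : ¬(p ∈ insert k S ∨ r ∈ insert k S) := by simp_all
      simp only [setMutation, if_neg hS, if_neg hS', if_neg (mt Or.symm hS), sum_insert hk]
      omega

theorem foldl_quiverMutation_setMutation (hB : ∀ p r, B p r = 0 ∨ B r p = 0) (l : List W) :
    ∀ S : Finset W, l.Nodup → Disjoint S l.toFinset →
      (∀ s ∈ S ∪ l.toFinset, ∀ t ∈ S ∪ l.toFinset, B s t = 0) →
      l.foldl quiverMutation (setMutation B S) = setMutation B (S ∪ l.toFinset) := by
  induction l with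
  | nil => simp
  | cons a l ih =>
    intro S hl hdisj hind
    have ha : a ∉ S := fun h => disjoint_left.mp hdisj h (by simp)
    have hunion : insert a S ∪ l.toFinset = S ∪ (a :: l).toFinset := by
      rw [List.toFinset_cons, union_insert, insert_union]
    have hdisj' : Disjoint (insert a S) l.toFinset := by
      rw [List.toFinset_cons, disjoint_insert_right] at hdisj
      exact disjoint_insert_left.mpr ⟨by simpa using (List.nodup_cons.mp hl).1, hdisj.2⟩
    have hsub : insert a S ⊆ S ∪ (a :: l).toFinset := by
      rw [← hunion]; exact subset_union_left
    rw [List.foldl_cons, quiverMutation_setMutation hB ha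
      (fun s hs t ht => hind s (hsub hs) t (hsub ht)),
      ih _ (List.nodup_cons.mp hl).2 hdisj' (hunion ▸ hind), hunion]

theorem foldl_quiverMutation_eq_setMutation (hB : ∀ p r, B p r = 0 ∨ B r p = 0)
    {l : List W} (hl : l.Nodup) (hind : ∀ s ∈ l, ∀ t ∈ l, B s t = 0) :
    l.foldl quiverMutation B = setMutation B l.toFinset := by
  simpa [setMutation_empty hB] using
    foldl_quiverMutation_setMutation hB l ∅ hl (disjoint_empty_left _) (by simpa using hind)

theorem setMutation_eq_flip {S : Finset W} (hcompl : ∀ p ∉ S, ∀ r ∉ S, B p r = 0)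
    (hpaths : ∀ p ∉ S, ∀ r ∉ S, ∑ k ∈ S, B p k * B k r = ∑ k ∈ S, B r k * B k p) :
    setMutation B S = flip B := by
  funext p r
  by_cases hS : p ∈ S ∨ r ∈ S
  · simp [setMutation, hS, flip]
  · obtain ⟨hp, hr⟩ := not_or.mp hS
    simp [setMutation, hS, flip, hcompl p hp r hr, hcompl r hr p hp, hpaths p hp r hr]

theorem sum_mul_eq_ite_of_path_unique {S : Finset W} {p r : W} (m : W)
    (h : ∀ k ∈ S, B p k ≠ 0 → B k r ≠ 0 → k = m) :
    ∑ k ∈ S, B p k * B k r = if m ∈ S then B p m * B m r else 0 := by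
  rw [← sum_ite_eq' S m (fun k => B p k * B k r)]
  refine sum_congr rfl fun k hk => ?_
  split_ifs with hkm
  · rw [hkm]
  · by_contra hne
    exact hkm (h k hk (left_ne_zero_of_mul hne) (right_ne_zero_of_mul hne))

end Mutation

section Alternating

variable {V : Type*} {q : V → V → ℕ}

theorem not_isSource_of_ne_zero {i j : V} (h : q i j ≠ 0) : ¬isSource q j := fun hj => h (hj i)

theorem Alternating.isSource_of_ne_zero (hq : Alternating q) {i j : V} (h : q i j ≠ 0) :
    isSource q i :=
  (hq i).resolve_right fun hi => h (hi j)

theorem Alternating.apply_self (hq : Alternating q) (i : V) : q i i = 0 :=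
  (hq i).elim (fun h => h i) (fun h => h i)

theorem Alternating.orientation (hq : Alternating q) {i j : V} (h : q i j ≠ 0) :
    isSource q i ∧ ¬isSink q i ∧ ¬isSource q j ∧ isSink q j ∧ q j i = 0 :=
  ⟨hq.isSource_of_ne_zero h, fun hi => h (hi j), not_isSource_of_ne_zero h,
    (hq j).resolve_left (not_isSource_of_ne_zero h), hq.isSource_of_ne_zero h j⟩

end Alternating

section SquareProduct

variable {V V' : Type*} {q : V → V → ℕ} {q' : V' → V' → ℕ}

/-- `ε(i) = ε(i')`, i.e. `(i, i') ∈ M_{+,+} ∪ M_{-,-}`. -/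
def SignCoherent (q : V → V → ℕ) (q' : V' → V' → ℕ) (p : V × V') : Prop :=
  isSource q p.1 ↔ isSource q' p.2

theorem squareProd_self (hq : Alternating q) (hq' : Alternating q') (p : V × V') :
    squareProd q q' p p = 0 := by
  simp [squareProd, hq.apply_self, hq'.apply_self]

theorem squareProd_ne_zero_cases (hq : Alternating q) (hq' : Alternating q') {p r : V × V'}
    (h : squareProd q q' p r ≠ 0) :
    (p.2 = r.2 ∧ ¬SignCoherent q q' p ∧ SignCoherent q q' r) ∨
      (p.1 = r.1 ∧ (isSource q' p.2 ↔ ¬isSink q p.1) ∧ (isSource q' r.2 ↔ isSink q p.1)) := by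
  unfold squareProd at h
  by_cases hh : (if p.2 = r.2 then (if isSource q' p.2 then q r.1 p.1 else q p.1 r.1) else 0) = 0
  · rw [hh, zero_add] at h
    obtain ⟨h₁, hv⟩ : p.1 = r.1 ∧ (if isSink q p.1 then q' r.2 p.2 else q' p.2 r.2) ≠ 0 := by
      by_contra hc; simp_all
    refine Or.inr ⟨h₁, ?_⟩
    split_ifs at hv <;>
      (have := hq'.isSource_of_ne_zero hv; have := not_isSource_of_ne_zero hv; tauto)
  · obtain ⟨h₂, hv⟩ : p.2 = r.2 ∧ (if isSource q' p.2 then q r.1 p.1 else q p.1 r.1) ≠ 0 := by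
      by_contra hc; simp_all
    refine Or.inl ⟨h₂, ?_⟩
    unfold SignCoherent
    rw [← h₂]
    split_ifs at hv <;>
      (have := hq.isSource_of_ne_zero hv; have := not_isSource_of_ne_zero hv; tauto)

theorem signCoherent_iff_not_of_squareProd_ne_zero (hq : Alternating q) (hq' : Alternating q')
    {p r : V × V'} (h : squareProd q q' p r ≠ 0) :
    SignCoherent q q' p ↔ ¬SignCoherent q q' r := by
  rcases squareProd_ne_zero_cases hq hq' h with ⟨-, hp, hr⟩ | ⟨h₁, hp, hr⟩
  · tauto
  · unfold SignCoherent; rw [← h₁]; tauto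

theorem squareProd_eq_zero_of_signCoherent_iff (hq : Alternating q) (hq' : Alternating q')
    {p r : V × V'} (h : SignCoherent q q' p ↔ SignCoherent q q' r) :
    squareProd q q' p r = 0 := by
  by_contra hne
  have := signCoherent_iff_not_of_squareProd_ne_zero hq hq' hne
  tauto

theorem squareProd_path (hq : Alternating q) (hq' : Alternating q') {p k r : V × V'}
    (h₁ : squareProd q q' p k ≠ 0) (h₂ : squareProd q q' k r ≠ 0) :
    (SignCoherent q q' k ∧ k = (r.1, p.2)) ∨ (¬SignCoherent q q' k ∧ k = (p.1, r.2)) := by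
  rcases squareProd_ne_zero_cases hq hq' h₁ with ⟨e₁, -, hk⟩ | ⟨e₁, -, hk⟩ <;>
    rcases squareProd_ne_zero_cases hq hq' h₂ with ⟨e₂, hk', -⟩ | ⟨e₂, hk', -⟩
  · exact absurd hk hk'
  · exact Or.inl ⟨hk, Prod.ext e₂ e₁.symm⟩
  · exact Or.inr ⟨hk', Prod.ext e₁.symm e₂⟩
  · rw [← e₁] at hk'; tauto

theorem squareProd_eq_zero_or (hq : Alternating q) (hq' : Alternating q') (p r : V × V') :
    squareProd q q' p r = 0 ∨ squareProd q q' r p = 0 := by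
  by_contra! h
  have hrp : r = p := by rcases squareProd_path hq hq' h.1 h.2 with ⟨-, h⟩ | ⟨-, h⟩ <;> exact h
  exact h.1 (hrp ▸ squareProd_self hq hq' p)

theorem squareProd_hv_paths_eq (hq : Alternating q) (hq' : Alternating q') {i j : V} {i' j' : V'}
    (h₁ : i ≠ j) (h₂ : i' ≠ j') :
    squareProd q q' (i, i') (j, i') * squareProd q q' (j, i') (j, j') =
      squareProd q q' (j, j') (i, j') * squareProd q q' (i, j') (i, i') := by
  simp only [squareProd, h₁, h₂, h₁.symm, h₂.symm, if_true, if_false, add_zero, zero_add]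
  obtain ⟨a, b⟩ | a | a : q i j = 0 ∧ q j i = 0 ∨ q i j ≠ 0 ∨ q j i ≠ 0 := by tauto
  · simp [a, b]
  all_goals
    obtain ⟨c, d⟩ | c | c : q' i' j' = 0 ∧ q' j' i' = 0 ∨ q' i' j' ≠ 0 ∨ q' j' i' ≠ 0 := by tauto
  all_goals first | simp [c, d] | simp [hq.orientation a, hq'.orientation c]

theorem squareProd_vh_paths_eq (hq : Alternating q) (hq' : Alternating q') {i j : V} {i' j' : V'}
    (h₁ : i ≠ j) (h₂ : i' ≠ j') :
    squareProd q q' (i, i') (i, j') * squareProd q q' (i, j') (j, j') =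
      squareProd q q' (j, j') (j, i') * squareProd q q' (j, i') (i, i') := by
  simp only [squareProd, h₁, h₂, h₁.symm, h₂.symm, if_true, if_false, add_zero, zero_add]
  obtain ⟨a, b⟩ | a | a : q i j = 0 ∧ q j i = 0 ∨ q i j ≠ 0 ∨ q j i ≠ 0 := by tauto
  · simp [a, b]
  all_goals
    obtain ⟨c, d⟩ | c | c : q' i' j' = 0 ∧ q' j' i' = 0 ∨ q' i' j' ≠ 0 ∨ q' j' i' ≠ 0 := by tauto
  all_goals first | simp [c, d] | simp [hq.orientation a, hq'.orientation c]

theorem sum_squareProd_paths_of_signCoherent (hq : Alternating q) (hq' : Alternating q')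
    {S : Finset (V × V')} (hS : ∀ k ∈ S, SignCoherent q q' k) (p r : V × V') :
    ∑ k ∈ S, squareProd q q' p k * squareProd q q' k r =
      if (r.1, p.2) ∈ S then squareProd q q' p (r.1, p.2) * squareProd q q' (r.1, p.2) r
      else 0 :=
  sum_mul_eq_ite_of_path_unique _ fun k hk h₁ h₂ =>
    ((squareProd_path hq hq' h₁ h₂).resolve_right fun h => h.1 (hS k hk)).2

theorem sum_squareProd_paths_of_not_signCoherent (hq : Alternating q) (hq' : Alternating q')
    {S : Finset (V × V')} (hS : ∀ k ∈ S, ¬SignCoherent q q' k) (p r : V × V') :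
    ∑ k ∈ S, squareProd q q' p k * squareProd q q' k r =
      if (p.1, r.2) ∈ S then squareProd q q' p (p.1, r.2) * squareProd q q' (p.1, r.2) r
      else 0 :=
  sum_mul_eq_ite_of_path_unique _ fun k hk h₁ h₂ =>
    ((squareProd_path hq hq' h₁ h₂).resolve_left fun h => hS k hk h.1).2

theorem signCoherent_corner_iff {p r : V × V'}
    (h : SignCoherent q q' p ↔ SignCoherent q q' r) :
    SignCoherent q q' (r.1, p.2) ↔ SignCoherent q q' (p.1, r.2) := by
  unfold SignCoherent at *
  tauto

theorem foldl_quiverMutation_squareProd (hq : Alternating q) (hq' : Alternating q') (c : Prop)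
    {l : List (V × V')} (hl : l.Nodup) (hmem : ∀ p, p ∈ l ↔ (SignCoherent q q' p ↔ c)) :
    l.foldl quiverMutation (squareProd q q') = flip (squareProd q q') := by
  have hmem' : ∀ p, p ∈ l.toFinset ↔ (SignCoherent q q' p ↔ c) := by simpa using hmem
  have hsame : ∀ p r, (p ∈ l ↔ r ∈ l) → squareProd q q' p r = 0 := fun p r h =>
    squareProd_eq_zero_of_signCoherent_iff hq hq' (by rw [hmem, hmem] at h; tauto)
  rw [foldl_quiverMutation_eq_setMutation (squareProd_eq_zero_or hq hq') hl
    fun s hs t ht => hsame s t (iff_of_true hs ht)]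
  refine setMutation_eq_flip
    (fun p hp r hr => hsame p r (iff_of_false (by simpa using hp) (by simpa using hr)))
    fun p hp r hr => ?_
  have hpr : SignCoherent q q' p ↔ SignCoherent q q' r := by
    rw [hmem'] at hp hr; tauto
  have hcorner : (r.1, p.2) ∈ l.toFinset ↔ (p.1, r.2) ∈ l.toFinset := by
    rw [hmem', hmem', signCoherent_corner_iff hpr]
  obtain ⟨i, i'⟩ := p
  obtain ⟨j, j'⟩ := r
  by_cases hc : c
  · have hS : ∀ k ∈ l.toFinset, SignCoherent q q' k := fun k hk => ((hmem' k).mp hk).mpr hc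
    rw [sum_squareProd_paths_of_signCoherent hq hq' hS,
      sum_squareProd_paths_of_signCoherent hq hq' hS]
    split_ifs with h₁ h₂ h₂
    · exact squareProd_hv_paths_eq hq hq' (by rintro rfl; exact hp h₁) (by rintro rfl; exact hr h₁)
    · exact absurd (hcorner.mp h₁) h₂
    · exact absurd (hcorner.mpr h₂) h₁
    · rfl
  · have hS : ∀ k ∈ l.toFinset, ¬SignCoherent q q' k := fun k hk h => hc (((hmem' k).mp hk).mp h)
    rw [sum_squareProd_paths_of_not_signCoherent hq hq' hS,
      sum_squareProd_paths_of_not_signCoherent hq hq' hS]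
    split_ifs with h₁ h₂ h₂
    · exact squareProd_vh_paths_eq hq hq' (by rintro rfl; exact hr h₁) (by rintro rfl; exact hp h₁)
    · exact absurd (hcorner.mpr h₁) h₂
    · exact absurd (hcorner.mp h₂) h₁
    · rfl

end SquareProduct

theorem Enum.append {V V' : Type*} {q : V → V → ℕ} {q' : V' → V' → ℕ} {σ σ' : Bool}
    {l₁ l₂ : List (V × V')} (h₁ : Enum q q' σ σ' l₁) (h₂ : Enum q q' (!σ) (!σ') l₂) :
    (l₁ ++ l₂).Nodup ∧ ∀ p, p ∈ l₁ ++ l₂ ↔ (SignCoherent q q' p ↔ σ = σ') := by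
  refine ⟨List.nodup_append.mpr ⟨h₁.1, h₂.1, ?_⟩, fun p => ?_⟩
  · rintro p hp₁ _ hp₂ rfl
    have := ((h₁.2 p).mp hp₁).1
    have := ((h₂.2 p).mp hp₂).1
    cases σ <;> simp_all [signClass]
  · rw [List.mem_append, h₁.2, h₂.2]
    cases σ <;> cases σ' <;> simp [Mclass, signClass, SignCoherent] <;> tauto

theorem squareProd_mu_square_general {V V' : Type*}
    (q : V → V → ℕ) (q' : V' → V' → ℕ)
    (hq : Alternating q) (hq' : Alternating q') :
    (∀ lmm lpp, Enum q q' false false lmm → Enum q q' true true lpp →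
        lpp.foldl quiverMutation (lmm.foldl quiverMutation (squareProd q q')) =
          fun p r => squareProd q q' r p) ∧
      (∀ lpm lmp, Enum q q' true false lpm → Enum q q' false true lmp →
        lmp.foldl quiverMutation (lpm.foldl quiverMutation (squareProd q q')) =
          fun p r => squareProd q q' r p) ∧
      (∀ lpm lmp lpp lmm, Enum q q' true false lpm → Enum q q' false true lmp →
        Enum q q' true true lpp → Enum q q' false false lmm →
        lmm.foldl quiverMutation (lpp.foldl quiverMutation
          (lmp.foldl quiverMutation (lpm.foldl quiverMutation (squareProd q q')))) =
          squareProd q q') := by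
  have hopposite : ∀ σ σ' l₁ l₂, Enum q q' σ σ' l₁ → Enum q q' (!σ) (!σ') l₂ →
      l₂.foldl quiverMutation (l₁.foldl quiverMutation (squareProd q q')) =
        flip (squareProd q q') := fun σ σ' l₁ l₂ h₁ h₂ => by
    rw [← List.foldl_append]
    exact foldl_quiverMutation_squareProd hq hq' _ (h₁.append h₂).1 (h₁.append h₂).2
  refine ⟨hopposite false false, hopposite true false, fun lpm lmp lpp lmm hpm hmp hpp hmm => ?_⟩
  rw [hopposite true false lpm lmp hpm hmp, foldl_quiverMutation_flip, foldl_quiverMutation_flip,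
    hopposite true true lpp lmm hpp hmm]
  rfl

/-- For alternating quivers `Q`, `Q'` with underlying Dynkin (tree-shaped, simply
laced) graphs: `μ_{+,+} ∘ μ_{-,-}` and `μ_{-,+} ∘ μ_{+,-}` transform `Q □ Q'` into
the opposite quiver `(Q □ Q')^{op}`, and consequently
`μ_□ = μ_{-,-} ∘ μ_{+,+} ∘ μ_{-,+} ∘ μ_{+,-}` transforms `Q □ Q'` into itself.
(Composition `μ_{σ,σ'}` is realized by folding quiver mutation over any enumeration
of the class `M_{σ,σ'}`; there are no arrows between two vertices of one class, so
the order is irrelevant.) -/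
theorem squareProd_mu_square {V V' : Type*} [Fintype V] [Fintype V']
    (q : V → V → ℕ) (q' : V' → V' → ℕ)
    (hq0 : ∀ i, q i i = 0) (hq'0 : ∀ i', q' i' i' = 0)
    (hq1 : ∀ i j, q i j ≤ 1) (hq'1 : ∀ i' j', q' i' j' ≤ 1)
    (htree : (symGraph q).IsTree) (htree' : (symGraph q').IsTree)
    (hq : Alternating q) (hq' : Alternating q') :
    (∀ lmm lpp, Enum q q' false false lmm → Enum q q' true true lpp →
        lpp.foldl quiverMutation (lmm.foldl quiverMutation (squareProd q q')) =
          fun p r => squareProd q q' r p) ∧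
      (∀ lpm lmp, Enum q q' true false lpm → Enum q q' false true lmp →
        lmp.foldl quiverMutation (lpm.foldl quiverMutation (squareProd q q')) =
          fun p r => squareProd q q' r p) ∧
      (∀ lpm lmp lpp lmm, Enum q q' true false lpm → Enum q q' false true lmp →
        Enum q q' true true lpp → Enum q q' false false lmm →
        lmm.foldl quiverMutation (lpp.foldl quiverMutation
          (lmp.foldl quiverMutation (lpm.foldl quiverMutation (squareProd q q')))) =
          squareProd q q') :=
  squareProd_mu_square_general q q' hq hq'
end

section
/- The periodicity of the Y-system reduces to finite order of an automorphism: with the automorphisms τ_+ and τ_- of the field K = Frac(ℤ[Y_{ii'}]) defined below and φ = τ_-τ_+, all solutions (Y_{i,i',t}) of the Y-system associated with (Δ,Δ') are periodic in t of period dividing 2(h+h') if and only if the order of φ is finite and divides h+h'. -/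
open scoped BigOperators

/-- The field `K = Frac(ℤ[Y_{ii'}])`. -/
abbrev YSysField (I I' : Type) := FractionRing (MvPolynomial (I × I') ℤ)

/-- The generator `Y_{ii'}` of `K`. -/
noncomputable def Ygen {I I' : Type} (i : I) (i' : I') : YSysField I I' :=
  algebraMap (MvPolynomial (I × I') ℤ) (YSysField I I') (MvPolynomial.X (i, i'))

/-!
Let `gₜ = τ₋ τ₊ τ₋ ⋯` (`t` factors) and `Ŷₜ(i,i') = gₜ(Y_{ii'})^{±1}`, with sign `+` iff
`ε(i,i') = (-1)^t`. Then `Ŷ` is a solution of the Y-system over `K` with `Ŷ_{t+2n} = φⁿ(Ŷₜ)`, so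
the periodicity of this one solution already forces `φ^{h+h'} = 1`, an automorphism of `K` being
determined by its values on the generators.

Conversely, the Y-system splits into two independent halves, the points where
`ε(i,i') = (-1)^t` and the others, and a solution on one half is determined by its values at two
consecutive times. On each half, `Ŷ` takes the values `Y_{ii'}^{±1}` at two consecutive times, so
any solution over a field `F` is the specialization of `Ŷ` at some point of `F`, and inherits the
periodicity of `Ŷ`. Specialization is a relation (`EvalsTo`), since a rational function need not
be defined at a point.
-/

theorem one_add_inv_ne_zero {F : Type*} [Field F] {x : F} (hx : x ≠ 0) (h1 : 1 + x ≠ 0) :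
    1 + x⁻¹ ≠ 0 := by
  rw [show 1 + x⁻¹ = (1 + x) / x by field_simp; ring]
  exact div_ne_zero h1 hx

theorem Int.forall_of_consecutive {P : ℤ → Prop} (t₀ : ℤ) (h₀ : P t₀) (h₁ : P (t₀ + 1))
    (step : ∀ t, P (t + 1) → (P t ↔ P (t + 2))) (t : ℤ) : P t := by
  suffices ∀ t, P t ∧ P (t + 1) from (this t).1
  refine fun t => Int.inductionOn' t t₀ ⟨h₀, h₁⟩ (fun k _ ih => ?_) (fun k _ ih => ?_)
  · rw [add_assoc, one_add_one_eq_two]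
    exact ⟨ih.2, (step k ih.2).1 ih.1⟩
  · have h := step (k - 1)
    rw [sub_add_cancel, show k - 1 + 2 = k + 1 by ring] at h
    rw [sub_add_cancel]
    exact ⟨(h ih.1).2 ih.2, ih.1⟩

section

variable {R K F : Type*} [CommRing R] [Field K] [Algebra R K] [Field F] {ev : R →+* F}

variable (ev) in
def EvalsTo (x : K) (u : F) : Prop :=
  ∃ P Q : R, ev Q ≠ 0 ∧ x * algebraMap R K Q = algebraMap R K P ∧ u * ev Q = ev P

theorem evalsTo_algebraMap (P : R) : EvalsTo ev (algebraMap R K P) (ev P) :=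
  ⟨P, 1, by simp, by simp, by simp⟩

theorem evalsTo_one : EvalsTo ev (1 : K) 1 := by
  simpa using evalsTo_algebraMap (K := K) (ev := ev) 1

namespace EvalsTo

variable {x y : K} {u v : F}

theorem mul (hx : EvalsTo ev x u) (hy : EvalsTo ev y v) : EvalsTo ev (x * y) (u * v) := by
  obtain ⟨P, Q, hQ, hxQ, huQ⟩ := hx
  obtain ⟨P', Q', hQ', hyQ', hvQ'⟩ := hy
  refine ⟨P * P', Q * Q', by simp [hQ, hQ'], ?_, ?_⟩
  · rw [map_mul, map_mul, ← hxQ, ← hyQ']; ring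
  · rw [map_mul, map_mul, ← huQ, ← hvQ']; ring

theorem add (hx : EvalsTo ev x u) (hy : EvalsTo ev y v) : EvalsTo ev (x + y) (u + v) := by
  obtain ⟨P, Q, hQ, hxQ, huQ⟩ := hx
  obtain ⟨P', Q', hQ', hyQ', hvQ'⟩ := hy
  refine ⟨P * Q' + P' * Q, Q * Q', by simp [hQ, hQ'], ?_, ?_⟩
  · simp only [map_add, map_mul]
    linear_combination algebraMap R K Q' * hxQ + algebraMap R K Q * hyQ'
  · simp only [map_add, map_mul]
    linear_combination ev Q' * huQ + ev Q * hvQ'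

theorem prod {ι : Type*} (s : Finset ι) {f : ι → K} {g : ι → F}
    (h : ∀ j ∈ s, EvalsTo ev (f j) (g j)) : EvalsTo ev (∏ j ∈ s, f j) (∏ j ∈ s, g j) := by
  simpa [Prod.fst_prod, Prod.snd_prod] using
    Finset.prod_induction (fun j => (f j, g j)) (fun p : K × F => EvalsTo ev p.1 p.2)
      (fun _ _ => mul) evalsTo_one h

theorem pow (hx : EvalsTo ev x u) (n : ℕ) : EvalsTo ev (x ^ n) (u ^ n) := by
  simpa using prod (Finset.range n) fun _ _ => hx

theorem prod_pow {ι : Type*} [Fintype ι] {f : ι → K} {g : ι → F} {n : ι → ℕ}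
    (h : ∀ j, n j ≠ 0 → EvalsTo ev (f j) (g j)) :
    EvalsTo ev (∏ j, f j ^ n j) (∏ j, g j ^ n j) := by
  refine prod _ fun j _ => ?_
  by_cases hj : n j = 0
  · simpa [hj] using evalsTo_one
  · exact (h j hj).pow _

variable [IsFractionRing R K]

theorem ne_zero (hx : EvalsTo ev x u) (hu : u ≠ 0) : x ≠ 0 := by
  rintro rfl
  obtain ⟨P, Q, hQ, hxQ, huQ⟩ := hx
  have hP : P = 0 := IsFractionRing.injective R K (by simpa using hxQ.symm)
  exact mul_ne_zero hu hQ (by simpa [hP] using huQ)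

theorem inv (hx : EvalsTo ev x u) (hu : u ≠ 0) : EvalsTo ev x⁻¹ u⁻¹ := by
  have hx0 := hx.ne_zero hu
  obtain ⟨P, Q, hQ, hxQ, huQ⟩ := hx
  refine ⟨Q, P, by rw [← huQ]; exact mul_ne_zero hu hQ, ?_, ?_⟩
  · rw [← hxQ]; field_simp
  · rw [← huQ]; field_simp

theorem unique (hu : EvalsTo ev x u) (hv : EvalsTo ev x v) : u = v := by
  obtain ⟨P, Q, hQ, hxQ, huQ⟩ := hu
  obtain ⟨P', Q', hQ', hxQ', hvQ'⟩ := hv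
  have hPQ : P * Q' = P' * Q := IsFractionRing.injective R K (by
    simp only [map_mul, ← hxQ, ← hxQ']; ring)
  have hev := congrArg ev hPQ
  simp only [map_mul] at hev
  refine mul_right_cancel₀ (mul_ne_zero hQ hQ') ?_
  linear_combination ev Q' * huQ - ev Q * hvQ' + hev

theorem of_mul_eq {x y α β : K} {u v μ ν : F} (hx : EvalsTo ev x u) (hα : EvalsTo ev α μ)
    (hβ : EvalsTo ev β ν) (huν : u * ν ≠ 0) (hK : x * y * β = α) (hF : u * v * ν = μ) :
    EvalsTo ev y v := by
  have hxβ := hx.mul hβ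
  have hy : y = α * (x * β)⁻¹ := by
    rw [eq_mul_inv_iff_mul_eq₀ (hxβ.ne_zero huν)]; linear_combination hK
  have hv : v = μ * (u * ν)⁻¹ := by
    rw [eq_mul_inv_iff_mul_eq₀ huν]; linear_combination hF
  rw [hy, hv]
  exact hα.mul (hxβ.inv huν)

end EvalsTo

end

namespace YSystem

section Products

variable {I I' : Type*} {F : Type*} [Field F]

def numer [Fintype I] (a : I → I → ℕ) (y : I → I' → F) (i : I) (i' : I') : F :=
  ∏ j, (1 + y j i') ^ a i j

def denom [Fintype I'] (a' : I' → I' → ℕ) (y : I → I' → F) (i : I) (i' : I') : F :=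
  ∏ j', (1 + (y i j')⁻¹) ^ a' i' j'

def IsSolution [Fintype I] [Fintype I'] (a : I → I → ℕ) (a' : I' → I' → ℕ)
    (Y : ℤ → I → I' → F) : Prop :=
  ∀ t i i', Y (t - 1) i i' * Y (t + 1) i i' * denom a' (Y t) i i' = numer a (Y t) i i'

variable {a : I → I → ℕ} {a' : I' → I' → ℕ} {i : I} {i' : I'}

theorem numer_congr [Fintype I] {y z : I → I' → F} (h : ∀ j, a i j ≠ 0 → y j i' = z j i') :
    numer a y i i' = numer a z i i' := by
  refine Finset.prod_congr rfl fun j _ => ?_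
  by_cases hj : a i j = 0
  · simp [hj]
  · rw [h j hj]

theorem denom_congr [Fintype I'] {y z : I → I' → F}
    (h : ∀ j', a' i' j' ≠ 0 → y i j' = z i j') : denom a' y i i' = denom a' z i i' := by
  refine Finset.prod_congr rfl fun j' _ => ?_
  by_cases hj : a' i' j' = 0
  · simp [hj]
  · rw [h j' hj]

theorem map_numer [Fintype I] {L G : Type*} [Field L] [FunLike G F L] [RingHomClass G F L]
    (σ : G) (y : I → I' → F) : σ (numer a y i i') = numer a (fun j j' => σ (y j j')) i i' := by
  simp [numer, map_prod]

theorem map_denom [Fintype I'] {L G : Type*} [Field L] [FunLike G F L] [RingHomClass G F L]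
    (σ : G) (y : I → I' → F) :
    σ (denom a' y i i') = denom a' (fun j j' => σ (y j j')) i i' := by
  simp [denom, map_prod]

theorem denom_ne_zero [Fintype I'] {y : I → I' → F} (h : ∀ j', 1 + (y i j')⁻¹ ≠ 0) :
    denom a' y i i' ≠ 0 :=
  Finset.prod_ne_zero_iff.2 fun j' _ => pow_ne_zero _ (h j')

theorem evalsTo_numer [Fintype I] {R K : Type*} [CommRing R] [Field K] [Algebra R K]
    {ev : R →+* F} {y : I → I' → K} {z : I → I' → F}
    (h : ∀ j, a i j ≠ 0 → EvalsTo ev (y j i') (z j i')) :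
    EvalsTo ev (numer a y i i') (numer a z i i') :=
  EvalsTo.prod_pow fun j hj => evalsTo_one.add (h j hj)

theorem evalsTo_denom [Fintype I'] {R K : Type*} [CommRing R] [Field K] [Algebra R K]
    [IsFractionRing R K] {ev : R →+* F} {y : I → I' → K} {z : I → I' → F}
    (h : ∀ j', a' i' j' ≠ 0 → EvalsTo ev (y i j') (z i j')) (hz : ∀ j', z i j' ≠ 0) :
    EvalsTo ev (denom a' y i i') (denom a' z i i') :=
  EvalsTo.prod_pow fun j' hj => evalsTo_one.add ((h j' hj).inv (hz j'))

end Products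

section Parity

variable {I I' : Type*} {εI : I → Bool} {εI' : I' → Bool}

def IsBipartition (a : I → I → ℕ) (ε : I → Bool) : Prop :=
  ∀ i j, a i j ≠ 0 → ε i ≠ ε j

/-- Whether `ε(i,i') = (-1)^t`. The Y-system at `(t,i,i')` only involves points of the other
class, so it splits into two independent halves. -/
def parityClass (εI : I → Bool) (εI' : I' → Bool) (t : ℤ) (i : I) (i' : I') : Bool :=
  decide ((εI i = εI' i') ↔ Even t)

theorem parityClass_add_one (t : ℤ) (i : I) (i' : I') :
    parityClass εI εI' (t + 1) i i' = !parityClass εI εI' t i i' := by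
  unfold parityClass
  by_cases h : εI i = εI' i' <;> by_cases ht : Even t <;>
    simp_all [Int.not_even_iff_odd]

theorem parityClass_add_two_mul (t n : ℤ) (i : I) (i' : I') :
    parityClass εI εI' (t + 2 * n) i i' = parityClass εI εI' t i i' := by
  simp [parityClass, Int.even_add]

theorem parityClass_of_ne_left {i j : I} (h : εI i ≠ εI j) (t : ℤ) (i' : I') :
    parityClass εI εI' t j i' = !parityClass εI εI' t i i' := by
  unfold parityClass
  rw [Bool.eq_not_of_ne h.symm]
  by_cases ht : Even t <;> cases εI i <;> cases εI' i' <;> simp [ht]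

theorem parityClass_of_ne_right {i' j' : I'} (h : εI' i' ≠ εI' j') (t : ℤ) (i : I) :
    parityClass εI εI' t i j' = !parityClass εI εI' t i i' := by
  unfold parityClass
  rw [Bool.eq_not_of_ne h.symm]
  by_cases ht : Even t <;> cases εI i <;> cases εI' i' <;> simp [ht]

end Parity

section AlternatingProd

variable {G : Type*} [Group G] (τ : Bool → G)

/-- For `t ≥ 0`, the product `τ false * τ true * τ false * ⋯` of `t` factors. -/
def alternatingProd (t : ℤ) : G :=
  (τ false * τ true) ^ (t / 2) * τ false ^ (t % 2)

theorem alternatingProd_zero : alternatingProd τ 0 = 1 := by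
  simp [alternatingProd]

theorem alternatingProd_add_one (t : ℤ) :
    alternatingProd τ (t + 1) = alternatingProd τ t * τ (decide (Odd t)) := by
  rcases Int.emod_two_eq_zero_or_one t with ht | ht
  · have hodd : ¬ Odd t := Int.not_odd_iff.2 ht
    have hdiv : (t + 1) / 2 = t / 2 := by omega
    have hmod : (t + 1) % 2 = 1 := by omega
    simp [alternatingProd, hodd, hdiv, hmod, ht]
  · have hodd : Odd t := Int.odd_iff.2 ht
    have hdiv : (t + 1) / 2 = t / 2 + 1 := by omega
    have hmod : (t + 1) % 2 = 0 := by omega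
    simp [alternatingProd, hodd, hdiv, hmod, ht, zpow_add_one, mul_assoc]

theorem alternatingProd_add_two_mul (t n : ℤ) :
    alternatingProd τ (t + 2 * n) = (τ false * τ true) ^ n * alternatingProd τ t := by
  have hdiv : (t + 2 * n) / 2 = n + t / 2 := by omega
  have hmod : (t + 2 * n) % 2 = t % 2 := by omega
  simp [alternatingProd, hdiv, hmod, zpow_add, mul_assoc]

end AlternatingProd

section Generators

variable {I I' : Type}

theorem Ygen_ne_zero (i : I) (i' : I') : Ygen i i' ≠ 0 :=
  (map_ne_zero_iff _ (IsFractionRing.injective _ _)).2 (MvPolynomial.X_ne_zero _)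

theorem one_add_Ygen_ne_zero (i : I) (i' : I') : 1 + Ygen i i' ≠ 0 := by
  have hpoly : (1 + MvPolynomial.X (i, i') : MvPolynomial (I × I') ℤ) ≠ 0 := fun h => by
    simpa [MvPolynomial.coeff_zero_X] using congrArg (MvPolynomial.coeff 0) h
  simpa [Ygen] using (map_ne_zero_iff _ (IsFractionRing.injective _ (YSysField I I'))).2 hpoly

theorem eq_one_of_forall_Ygen {σ : RingAut (YSysField I I')}
    (h : ∀ i i', σ (Ygen i i') = Ygen i i') : σ = 1 := by
  have hσ : (σ : YSysField I I' →+* YSysField I I') = RingHom.id _ :=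
    IsLocalization.ringHom_ext (nonZeroDivisors (MvPolynomial (I × I') ℤ)) <|
      MvPolynomial.ringHom_ext (fun r => by rw [MvPolynomial.hom_C, MvPolynomial.hom_C])
        (fun p => h p.1 p.2)
  ext x
  exact RingHom.congr_fun hσ x

end Generators

section UniversalSolution

variable {I I' : Type} {a : I → I → ℕ} {a' : I' → I' → ℕ} {εI : I → Bool} {εI' : I' → Bool}
  {τ : Bool → RingAut (YSysField I I')}

def IsTau [Fintype I] [Fintype I'] (a : I → I → ℕ) (a' : I' → I' → ℕ) (εI : I → Bool)
    (εI' : I' → Bool) (τ : Bool → RingAut (YSysField I I')) : Prop :=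
  ∀ b i i', τ b (Ygen i i') =
    if (εI i = εI' i') = (b = true) then
      Ygen i i' * numer a Ygen i i' * (denom a' Ygen i i')⁻¹
    else (Ygen i i')⁻¹

noncomputable def univSol (εI : I → Bool) (εI' : I' → Bool)
    (τ : Bool → RingAut (YSysField I I')) (t : ℤ) (i : I) (i' : I') : YSysField I I' :=
  if parityClass εI εI' t i i' then alternatingProd τ t (Ygen i i')
  else (alternatingProd τ t (Ygen i i'))⁻¹

theorem univSol_ne_zero (t : ℤ) (i : I) (i' : I') : univSol εI εI' τ t i i' ≠ 0 := by
  have h0 := (map_ne_zero (alternatingProd τ t)).2 (Ygen_ne_zero i i')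
  unfold univSol
  split_ifs <;> simpa using h0

theorem one_add_univSol_ne_zero (t : ℤ) (i : I) (i' : I') :
    1 + univSol εI εI' τ t i i' ≠ 0 := by
  have h0 := (map_ne_zero (alternatingProd τ t)).2 (Ygen_ne_zero i i')
  have h1 := (map_ne_zero (alternatingProd τ t)).2 (one_add_Ygen_ne_zero i i')
  rw [map_add, map_one] at h1
  unfold univSol
  split_ifs
  · exact h1
  · exact one_add_inv_ne_zero h0 h1

theorem univSol_add_two_mul (t n : ℤ) (i : I) (i' : I') :
    univSol εI εI' τ (t + 2 * n) i i' = ((τ false * τ true) ^ n) (univSol εI εI' τ t i i') := by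
  simp only [univSol, parityClass_add_two_mul, alternatingProd_add_two_mul, RingAut.mul_apply]
  split_ifs <;> simp [map_inv₀]

theorem univSol_zero (i : I) (i' : I') :
    univSol εI εI' τ 0 i i' = if εI i = εI' i' then Ygen i i' else (Ygen i i')⁻¹ := by
  simp [univSol, parityClass, alternatingProd_zero]

theorem pow_eq_one_of_univSol_periodic {N : ℕ}
    (hN : ∀ i i', univSol εI εI' τ (2 * N) i i' = univSol εI εI' τ 0 i i') :
    (τ false * τ true) ^ N = 1 := by
  refine eq_one_of_forall_Ygen fun i i' => ?_
  have h := hN i i'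
  rw [← zero_add (2 * (N : ℤ)), univSol_add_two_mul, zpow_natCast, univSol_zero] at h
  split_ifs at h
  · exact h
  · exact inv_injective (by simpa [map_inv₀] using h)

theorem numer_univSol_of_parityClass_eq_false [Fintype I] (hbip : IsBipartition a εI) {t : ℤ}
    {i : I} {i' : I'} (h : parityClass εI εI' t i i' = false) :
    numer a (univSol εI εI' τ t) i i' = alternatingProd τ t (numer a Ygen i i') := by
  rw [map_numer]
  refine numer_congr fun j hj => ?_
  simp [univSol, parityClass_of_ne_left (hbip i j hj), h]

theorem denom_univSol_of_parityClass_eq_false [Fintype I'] (hbip' : IsBipartition a' εI')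
    {t : ℤ} {i : I} {i' : I'} (h : parityClass εI εI' t i i' = false) :
    denom a' (univSol εI εI' τ t) i i' = alternatingProd τ t (denom a' Ygen i i') := by
  rw [map_denom]
  refine denom_congr fun j' hj => ?_
  simp [univSol, parityClass_of_ne_right (hbip' i' j' hj), h]

variable [Fintype I] [Fintype I']

theorem alternatingProd_add_one_Ygen (hτ : IsTau a a' εI εI' τ) (t : ℤ) (i : I) (i' : I') :
    alternatingProd τ (t + 1) (Ygen i i') =
      if parityClass εI εI' t i i' then (alternatingProd τ t (Ygen i i'))⁻¹
      else alternatingProd τ t (Ygen i i' * numer a Ygen i i' * (denom a' Ygen i i')⁻¹) := by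
  rw [alternatingProd_add_one, RingAut.mul_apply, hτ]
  unfold parityClass
  by_cases he : εI i = εI' i' <;> by_cases ht : Even t <;>
    simp [he, ht, map_inv₀, ← Int.not_even_iff_odd]

theorem univSol_add_one_of_parityClass (hτ : IsTau a a' εI εI' τ) {t : ℤ} {i : I} {i' : I'}
    (h : parityClass εI εI' t i i' = true) :
    univSol εI εI' τ (t + 1) i i' = univSol εI εI' τ t i i' := by
  simp [univSol, parityClass_add_one, h, alternatingProd_add_one_Ygen hτ]

theorem numer_univSol_add_one (hτ : IsTau a a' εI εI' τ) (hbip : IsBipartition a εI)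
    {t : ℤ} {i : I} {i' : I'} (h : parityClass εI εI' t i i' = false) :
    numer a (univSol εI εI' τ (t + 1)) i i' = numer a (univSol εI εI' τ t) i i' :=
  numer_congr fun j hj => univSol_add_one_of_parityClass hτ <| by
    simp [parityClass_of_ne_left (hbip i j hj), h]

theorem denom_univSol_add_one (hτ : IsTau a a' εI εI' τ) (hbip' : IsBipartition a' εI')
    {t : ℤ} {i : I} {i' : I'} (h : parityClass εI εI' t i i' = false) :
    denom a' (univSol εI εI' τ (t + 1)) i i' = denom a' (univSol εI εI' τ t) i i' :=
  denom_congr fun j' hj => univSol_add_one_of_parityClass hτ <| by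
    simp [parityClass_of_ne_right (hbip' i' j' hj), h]

theorem univSol_mul_univSol_add_one (hτ : IsTau a a' εI εI' τ) (hbip : IsBipartition a εI)
    (hbip' : IsBipartition a' εI') {t : ℤ} {i : I} {i' : I'}
    (h : parityClass εI εI' t i i' = false) :
    univSol εI εI' τ t i i' * univSol εI εI' τ (t + 1) i i' * denom a' (univSol εI εI' τ t) i i' =
      numer a (univSol εI εI' τ t) i i' := by
  have hX : alternatingProd τ t (Ygen i i') ≠ 0 := (map_ne_zero _).2 (Ygen_ne_zero i i')
  have hD : alternatingProd τ t (denom a' Ygen i i') ≠ 0 := (map_ne_zero _).2 <|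
    denom_ne_zero fun j' => one_add_inv_ne_zero (Ygen_ne_zero i j') (one_add_Ygen_ne_zero i j')
  rw [numer_univSol_of_parityClass_eq_false hbip h, denom_univSol_of_parityClass_eq_false hbip' h]
  simp only [univSol, parityClass_add_one, h, alternatingProd_add_one_Ygen hτ, map_mul, map_inv₀,
    Bool.not_false, Bool.false_eq_true, ↓reduceIte]
  field_simp

theorem univSol_isSolution (hτ : IsTau a a' εI εI' τ) (hbip : IsBipartition a εI)
    (hbip' : IsBipartition a' εI') : IsSolution a a' (univSol εI εI' τ) := by
  intro t i i'
  have hprev : parityClass εI εI' (t - 1) i i' = !parityClass εI εI' t i i' := by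
    simpa using (parityClass_add_one (εI := εI) (εI' := εI') (t - 1) i i').symm
  -- Both cases reduce to `univSol_mul_univSol_add_one` at whichever of `t - 1`, `t` has class
  -- `false`.
  cases hc : parityClass εI εI' t i i'
  · rw [hc] at hprev
    have hstay := univSol_add_one_of_parityClass (τ := τ) hτ hprev
    rw [sub_add_cancel] at hstay
    rw [← hstay]
    exact univSol_mul_univSol_add_one hτ hbip hbip' hc
  · rw [hc] at hprev
    have key := univSol_mul_univSol_add_one hτ hbip hbip' hprev
    have hN := numer_univSol_add_one hτ hbip hprev
    have hD := denom_univSol_add_one hτ hbip' hprev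
    rw [sub_add_cancel] at key hN hD
    rw [univSol_add_one_of_parityClass hτ hc, hN, hD, key]

end UniversalSolution

section Specialization

variable {I I' : Type} {a : I → I → ℕ} {a' : I' → I' → ℕ} {εI : I → Bool} {εI' : I' → Bool}
  {τ : Bool → RingAut (YSysField I I')} {F : Type*} [Field F] {Y : ℤ → I → I' → F}

def anchor (b : Bool) : ℤ := if b then -1 else 0

/-- Chosen so that on class `b` the values `Y_{ii'}^{±1}` of `univSol` at the times `anchor b`,
`anchor b + 1` evaluate to those of `Y` (`evalsOnClass_anchor`). -/
noncomputable def evalAt (εI : I → Bool) (εI' : I' → Bool) (Y : ℤ → I → I' → F) (b : Bool) :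
    MvPolynomial (I × I') ℤ →+* F :=
  MvPolynomial.eval₂Hom (Int.castRingHom F) fun p =>
    if εI p.1 = εI' p.2 then Y (anchor b + 1) p.1 p.2 else (Y (anchor b) p.1 p.2)⁻¹

def EvalsOnClass (εI : I → Bool) (εI' : I' → Bool) (τ : Bool → RingAut (YSysField I I'))
    (Y : ℤ → I → I' → F) (b : Bool) (t : ℤ) : Prop :=
  ∀ i i', parityClass εI εI' t i i' = b →
    EvalsTo (evalAt εI εI' Y b) (univSol εI εI' τ t i i') (Y t i i')

variable [Fintype I] [Fintype I']

theorem univSol_anchor_add_one (hτ : IsTau a a' εI εI' τ) (b : Bool) {i : I} {i' : I'}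
    (he : εI i = εI' i') : univSol εI εI' τ (anchor b + 1) i i' = Ygen i i' := by
  cases b
  · have hstay := univSol_add_one_of_parityClass (t := 0) (i := i) (i' := i') hτ
      (by simp [parityClass, he])
    norm_num at hstay
    simp [anchor, hstay, univSol_zero, he]
  · simp [anchor, univSol_zero, he]

theorem univSol_anchor (hτ : IsTau a a' εI εI' τ) (b : Bool) {i : I} {i' : I'}
    (he : εI i ≠ εI' i') : univSol εI εI' τ (anchor b) i i' = (Ygen i i')⁻¹ := by
  cases b
  · simp [anchor, univSol_zero, he]
  · have hstay := univSol_add_one_of_parityClass (t := -1) (i := i) (i' := i') hτ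
      (by simp [parityClass, he])
    norm_num at hstay
    simp [anchor, ← hstay, univSol_zero, he]

theorem evalsOnClass_anchor (hτ : IsTau a a' εI εI' τ) (hne : ∀ t i i', Y t i i' ≠ 0)
    (b : Bool) :
    EvalsOnClass εI εI' τ Y b (anchor b) ∧ EvalsOnClass εI εI' τ Y b (anchor b + 1) := by
  have hev (i : I) (i' : I') : evalAt εI εI' Y b (MvPolynomial.X (i, i')) =
      if εI i = εI' i' then Y (anchor b + 1) i i' else (Y (anchor b) i i')⁻¹ := by
    simp [evalAt]
  have hX (i : I) (i' : I') := evalsTo_algebraMap (ev := evalAt εI εI' Y b) (K := YSysField I I')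
    (MvPolynomial.X (i, i'))
  constructor
  · intro i i' hc
    have he : εI i ≠ εI' i' := by
      cases b <;> simpa [anchor, parityClass] using hc
    have hXinv := (hX i i').inv (by simpa [hev, he] using hne (anchor b) i i')
    simpa [univSol_anchor hτ b he, hev, he, Ygen] using hXinv
  · intro i i' hc
    have he : εI i = εI' i' := by
      cases b <;> simpa [anchor, parityClass] using hc
    simpa [univSol_anchor_add_one hτ b he, hev, he, Ygen] using hX i i'

theorem evalsTo_sub_one_iff_add_one (hτ : IsTau a a' εI εI' τ) (hbip : IsBipartition a εI)
    (hbip' : IsBipartition a' εI') (hne : ∀ t i i', Y t i i' ≠ 0)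
    (hne_inv : ∀ t i i', 1 + (Y t i i')⁻¹ ≠ 0) (hY : IsSolution a a' Y) {b : Bool} {s : ℤ}
    (hs : EvalsOnClass εI εI' τ Y b s) {i : I} {i' : I'} (hc : parityClass εI εI' s i i' = !b) :
    EvalsTo (evalAt εI εI' Y b) (univSol εI εI' τ (s - 1) i i') (Y (s - 1) i i') ↔
      EvalsTo (evalAt εI εI' Y b) (univSol εI εI' τ (s + 1) i i') (Y (s + 1) i i') := by
  have hN : EvalsTo (evalAt εI εI' Y b) (numer a (univSol εI εI' τ s) i i')
      (numer a (Y s) i i') :=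
    evalsTo_numer fun j hj => hs j i' <| by simp [parityClass_of_ne_left (hbip i j hj), hc]
  have hD : EvalsTo (evalAt εI εI' Y b) (denom a' (univSol εI εI' τ s) i i')
      (denom a' (Y s) i i') :=
    evalsTo_denom (fun j' hj => hs i j' <| by simp [parityClass_of_ne_right (hbip' i' j' hj), hc])
      (hne s i)
  have hD0 : denom a' (Y s) i i' ≠ 0 := denom_ne_zero (hne_inv s i)
  have hK := univSol_isSolution hτ hbip hbip' s i i'
  have hF := hY s i i'
  constructor <;> intro h
  · exact h.of_mul_eq hN hD (mul_ne_zero (hne _ i i') hD0) hK hF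
  · exact h.of_mul_eq hN hD (mul_ne_zero (hne _ i i') hD0)
      (by rw [mul_comm (univSol _ _ _ _ _ _)]; exact hK) (by rw [mul_comm (Y _ _ _)]; exact hF)

theorem evalsOnClass_of_isSolution (hτ : IsTau a a' εI εI' τ) (hbip : IsBipartition a εI)
    (hbip' : IsBipartition a' εI') (hne : ∀ t i i', Y t i i' ≠ 0)
    (hne_inv : ∀ t i i', 1 + (Y t i i')⁻¹ ≠ 0) (hY : IsSolution a a' Y) (b : Bool) (t : ℤ) :
    EvalsOnClass εI εI' τ Y b t := by
  obtain ⟨hanchor, hanchor'⟩ := evalsOnClass_anchor hτ hne b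
  refine Int.forall_of_consecutive (anchor b) hanchor hanchor' (fun t hs => ?_) t
  have hstep := fun i i' (hc : parityClass εI εI' (t + 1) i i' = !b) =>
    evalsTo_sub_one_iff_add_one hτ hbip hbip' hne hne_inv hY hs hc
  simp only [add_sub_cancel_right, add_assoc, one_add_one_eq_two] at hstep
  refine forall_congr' fun i => forall_congr' fun i' => ?_
  have hcls : parityClass εI εI' (t + 2) i i' = parityClass εI εI' t i i' := by
    simpa using parityClass_add_two_mul (εI := εI) (εI' := εI') t 1 i i'
  rw [hcls]
  refine imp_congr_right fun hc => hstep i i' ?_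
  rw [parityClass_add_one, hc]

theorem periodic_of_pow_eq_one (hτ : IsTau a a' εI εI' τ) (hbip : IsBipartition a εI)
    (hbip' : IsBipartition a' εI') {N : ℕ} (hφ : (τ false * τ true) ^ N = 1)
    (hne : ∀ t i i', Y t i i' ≠ 0) (hne_inv : ∀ t i i', 1 + (Y t i i')⁻¹ ≠ 0)
    (hY : IsSolution a a' Y) (t : ℤ) (i : I) (i' : I') :
    Y (t + 2 * N) i i' = Y t i i' := by
  have hval := evalsOnClass_of_isSolution hτ hbip hbip' hne hne_inv hY (parityClass εI εI' t i i')
  have hshift := hval (t + 2 * N) i i' (parityClass_add_two_mul t N i i')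
  rw [univSol_add_two_mul, zpow_natCast, hφ] at hshift
  exact hshift.unique (hval t i i' rfl)

end Specialization

end YSystem

/-- `true` codes `+` in the bipartitions `εI, εI'` and `ε = +1` in `τ b`, and `ε(i,i') = +1`
iff `εI i = εI' i'`. -/
theorem periodicity_iff_finite_order_general
    {I I' : Type} [Fintype I] [Fintype I']
    (a : I → I → ℕ) (a' : I' → I' → ℕ)
    (εI : I → Bool) (εI' : I' → Bool)
    (hbip : ∀ i j, a i j ≠ 0 → εI i ≠ εI j)
    (hbip' : ∀ i' j', a' i' j' ≠ 0 → εI' i' ≠ εI' j')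
    (h h' : ℕ)
    (τ : Bool → RingAut (YSysField I I'))
    (hτ : ∀ (b : Bool) (i : I) (i' : I'),
      τ b (Ygen i i') =
        if (εI i = εI' i') = (b = true) then
          Ygen i i' * (∏ j, (1 + Ygen j i') ^ a i j) *
            (∏ j', (1 + (Ygen i j')⁻¹) ^ a' i' j')⁻¹
        else (Ygen i i')⁻¹) :
    (∀ (F : Type) [Field F] (Y : ℤ → I → I' → F),
        (∀ t i i', Y t i i' ≠ 0) →
        (∀ t i i', 1 + Y t i i' ≠ 0) →
        (∀ t i i', 1 + (Y t i i')⁻¹ ≠ 0) →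
        (∀ t i i', Y (t - 1) i i' * Y (t + 1) i i' *
            ∏ j', (1 + (Y t i j')⁻¹) ^ a' i' j' = ∏ j, (1 + Y t j i') ^ a i j) →
        ∀ t i i', Y (t + 2 * (h + h')) i i' = Y t i i') ↔
      (τ false * τ true) ^ (h + h') = 1 := by
  constructor
  · intro H
    refine YSystem.pow_eq_one_of_univSol_periodic (εI := εI) (εI' := εI') fun i i' => ?_
    have hperiodic := H _ (YSystem.univSol εI εI' τ) YSystem.univSol_ne_zero
      YSystem.one_add_univSol_ne_zero
      (fun t i i' => one_add_inv_ne_zero (YSystem.univSol_ne_zero t i i')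
        (YSystem.one_add_univSol_ne_zero t i i'))
      (YSystem.univSol_isSolution hτ hbip hbip') 0 i i'
    rw [zero_add] at hperiodic
    exact_mod_cast hperiodic
  · intro hφ F _ Y hne _ hne_inv hY t i i'
    exact_mod_cast YSystem.periodic_of_pow_eq_one hτ hbip hbip' hφ hne hne_inv hY t i i'

/-- Periodicity of the `Y`-system associated with a pair of Dynkin diagrams reduces to
the finiteness of the order of the automorphism `φ = τ₋ τ₊`: all solutions of the
`Y`-system are periodic in `t` of period dividing `2(h+h')` if and only if
`φ^{h+h'} = 1`.

Here `I, I'` are the vertex sets of the two diagrams, `a, a'` their incidence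
matrices (symmetric with zero diagonal), `εI, εI'` the bipartitions (`true` codes
`+`), `h, h'` the Coxeter numbers, `τ b` (for `b : Bool` coding `ε = ±1`) the field
automorphisms of `K = Frac(ℤ[Y_{ii'}])` determined by the stated formulas on the
generators, and `ε(i,i') = +1` iff `εI i = εI' i'`. -/
theorem periodicity_iff_finite_order
    {I I' : Type} [Fintype I] [Fintype I'] [DecidableEq I] [DecidableEq I']
    (a : I → I → ℕ) (a' : I' → I' → ℕ)
    (hsymm : ∀ i j, a i j = a j i) (hdiag : ∀ i, a i i = 0)
    (hsymm' : ∀ i' j', a' i' j' = a' j' i') (hdiag' : ∀ i', a' i' i' = 0)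
    (εI : I → Bool) (εI' : I' → Bool)
    (hbip : ∀ i j, a i j ≠ 0 → εI i ≠ εI j)
    (hbip' : ∀ i' j', a' i' j' ≠ 0 → εI' i' ≠ εI' j')
    (h h' : ℕ)
    (τ : Bool → RingAut (YSysField I I'))
    (hτ : ∀ (b : Bool) (i : I) (i' : I'),
      τ b (Ygen i i') =
        if (εI i = εI' i') = (b = true) then
          Ygen i i' * (∏ j, (1 + Ygen j i') ^ a i j) *
            (∏ j', (1 + (Ygen i j')⁻¹) ^ a' i' j')⁻¹
        else (Ygen i i')⁻¹) :
    (∀ (F : Type) [Field F] (Y : ℤ → I → I' → F),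
        (∀ t i i', Y t i i' ≠ 0) →
        (∀ t i i', 1 + Y t i i' ≠ 0) →
        (∀ t i i', 1 + (Y t i i')⁻¹ ≠ 0) →
        (∀ t i i', Y (t - 1) i i' * Y (t + 1) i i' *
            ∏ j', (1 + (Y t i j')⁻¹) ^ a' i' j' = ∏ j, (1 + Y t j i') ^ a i j) →
        ∀ t i i', Y (t + 2 * (h + h')) i i' = Y t i i') ↔
      (τ false * τ true) ^ (h + h') = 1 :=
  periodicity_iff_finite_order_general a a' εI εI' hbip hbip' h h' τ hτ
end

section
/- Let G be a finite group acting admissibly on a finite quiver Q̃ without loops or 2-cycles (i.e. the orbit quiver has no loops or 2-cycles). Then the matrix B defined by b_{ij} = Σ_{ĩ∈i} b̃_{ĩ j̃} (for any representative j̃ of the orbit j) is skew-symmetrizable: D·B is skew-symmetric, where D is the diagonal matrix whose entry at an orbit i is the cardinality of the stabilizer in G of any vertex in i. -/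
/-! Sum over the group instead of over the orbit: every `z` in the orbit of `x` is `g • x` for
exactly `|Stab x|` elements `g`, so `|Stab x| · b x y = ∑ g, Bt (g • x) y`. Invariance and
skew-symmetry give `∑ g, Bt (g • x) y = ∑ g, Bt x (g⁻¹ • y) = -∑ g, Bt (g • y) x`. -/

open scoped Classical

open MulAction Finset

section

variable {G α : Type*} [Group G] [MulAction G α]

lemma card_filter_smul_eq_card_stabilizer [Fintype G] {x z : α} (hz : z ∈ orbit G x) :
    #{g : G | g • x = z} = Nat.card (stabilizer G x) := by
  obtain ⟨g₀, rfl⟩ := hz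
  rw [← Fintype.card_subtype, ← Nat.card_eq_fintype_card]
  exact Nat.card_congr <| ((Equiv.mulLeft g₀).subtypeEquiv fun s => by
    simp [mul_smul, mem_stabilizer_iff]).symm

lemma image_smul_univ_eq_filter_mem_orbit [Fintype G] [Fintype α] (x : α) :
    (univ : Finset G).image (· • x) = univ.filter (· ∈ orbit G x) := by
  ext z
  simp [mem_orbit_iff]

lemma sum_smul_eq_card_stabilizer_smul_sum_orbit [Fintype G] [Fintype α] {M : Type*}
    [AddCommMonoid M] (f : α → M) (x : α) :
    ∑ g : G, f (g • x) = Nat.card (stabilizer G x) • ∑ z ∈ univ.filter (· ∈ orbit G x), f z := by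
  rw [sum_comp, image_smul_univ_eq_filter_mem_orbit, smul_sum]
  refine sum_congr rfl fun z hz => ?_
  rw [card_filter_smul_eq_card_stabilizer (mem_filter.mp hz).2]

lemma sum_orbit_comp_smul [Fintype α] {M : Type*} [AddCommMonoid M] (f : α → M) (x : α) (g : G) :
    ∑ z ∈ univ.filter (· ∈ orbit G x), f (g • z) = ∑ z ∈ univ.filter (· ∈ orbit G x), f z :=
  sum_equiv (MulAction.toPerm g) (fun z => by
    simp only [mem_filter, mem_univ, true_and, toPerm_apply, ← orbit_eq_iff (a := g • z),
      orbit_smul, orbit_eq_iff]) fun _ _ => rfl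

end

theorem folded_matrix_skew_symmetrizable_general
    {Vt : Type*} [Fintype Vt]
    {G : Type*} [Group G] [Fintype G] [MulAction G Vt]
    (Bt : Vt → Vt → ℤ)
    (hskew : ∀ x y, Bt y x = -Bt x y)
    (hinv : ∀ (g : G) (x y : Vt), Bt (g • x) (g • y) = Bt x y) :
    (∀ x x' y y' : Vt, x' ∈ MulAction.orbit G x → y' ∈ MulAction.orbit G y →
        (∑ z ∈ Finset.univ.filter (· ∈ MulAction.orbit G x), Bt z y) =
          ∑ z ∈ Finset.univ.filter (· ∈ MulAction.orbit G x'), Bt z y') ∧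
      (∀ x y : Vt,
        (Nat.card (MulAction.stabilizer G x) : ℤ) *
            (∑ z ∈ Finset.univ.filter (· ∈ MulAction.orbit G x), Bt z y) =
          -((Nat.card (MulAction.stabilizer G y) : ℤ) *
            (∑ z ∈ Finset.univ.filter (· ∈ MulAction.orbit G y), Bt z x))) := by
  refine ⟨fun x x' y y' hx ⟨g, hy⟩ => ?_, fun x y => ?_⟩
  · rw [orbit_eq_iff.mpr hx, ← hy, ← sum_orbit_comp_smul (fun z => Bt z (g • y)) x g]
    simp only [hinv]
  · simp only [← nsmul_eq_mul, ← sum_smul_eq_card_stabilizer_smul_sum_orbit]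
    calc ∑ g : G, Bt (g • x) y
        = ∑ g : G, Bt x (g⁻¹ • y) := by
          refine sum_congr rfl fun g _ => ?_
          rw [← hinv g⁻¹, inv_smul_smul]
      _ = -∑ g : G, Bt (g • y) x := by
          rw [← sum_neg_distrib]
          exact Fintype.sum_equiv (Equiv.inv G) _ _ fun g => hskew _ _ ▸ rfl

/-- Folding a skew-symmetric matrix along an admissible group action yields a
skew-symmetrizable matrix.  Here `Bt` is the skew-symmetric matrix of a finite quiver
`Q̃` without loops or `2`-cycles, `G` acts on `Q̃` by quiver automorphisms
(`Bt (g•x) (g•y) = Bt x y`), and admissibility of the action means that the orbit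
quiver has no loops (`Bt` vanishes on pairs in a common orbit) and no `2`-cycles (no
pair of orbits with arrows in both directions).  The folded matrix is
`b x y = Σ_{z ∈ orbit(x)} Bt z y`; it only depends on the orbits of `x` and `y`, and
`D b` is skew-symmetric where `D` is diagonal with entries the cardinalities of the
stabilizers. -/
theorem folded_matrix_skew_symmetrizable
    {Vt : Type*} [Fintype Vt] [DecidableEq Vt]
    {G : Type*} [Group G] [Fintype G] [MulAction G Vt]
    (Bt : Vt → Vt → ℤ)
    (hskew : ∀ x y, Bt y x = -Bt x y)
    (hinv : ∀ (g : G) (x y : Vt), Bt (g • x) (g • y) = Bt x y)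
    (hnoloop : ∀ x y : Vt, y ∈ MulAction.orbit G x → Bt x y = 0)
    (hno2cycle : ∀ x y x' y' : Vt, x' ∈ MulAction.orbit G x → y' ∈ MulAction.orbit G y →
      0 < Bt x y → Bt x' y' ≤ 0 → Bt x' y' = 0) :
    (∀ x x' y y' : Vt, x' ∈ MulAction.orbit G x → y' ∈ MulAction.orbit G y →
        (∑ z ∈ Finset.univ.filter (· ∈ MulAction.orbit G x), Bt z y) =
          ∑ z ∈ Finset.univ.filter (· ∈ MulAction.orbit G x'), Bt z y') ∧
      (∀ x y : Vt,
        (Nat.card (MulAction.stabilizer G x) : ℤ) *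
            (∑ z ∈ Finset.univ.filter (· ∈ MulAction.orbit G x), Bt z y) =
          -((Nat.card (MulAction.stabilizer G y) : ℤ) *
            (∑ z ∈ Finset.univ.filter (· ∈ MulAction.orbit G y), Bt z x))) :=
  folded_matrix_skew_symmetrizable_general Bt hskew hinv
end

section
/- Commutation of mutation with folding for Y-seeds: let Q̃ be a quiver with an admissible action of a finite group G, Q = Q̃/ᵥG the valued orbit quiver, k a vertex of Q, and suppose the action of G on the mutated quiver Q̃' = ∏_{k̃∈k} μ_{k̃}(Q̃) is still admissible. Let π be the semifield morphism ℚ_sf(y_ĩ : ĩ∈Ĩ) → ℚ_sf(y_i : i∈I) sending y_ĩ to y_i (i the orbit of ĩ). If (Q', Y') = μ_k(Q, Y) is the valued Y-seed mutation and (Q̃', Ỹ') is the result of applying the mutations μ_{k̃}, k̃∈k, to (Q̃, Ỹ), then π(Ỹ'_ĩ) = Y'_i for every vertex ĩ of orbit i. -/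
/-!
The mutations `μ_k̃`, `k̃ ∈ k`, take place at the vertices of a single orbit, between which there
are no arrows. So none of them changes the row of another vertex of the orbit: each inverts its
own `Ỹ_k̃`, and multiplies every `Ỹ_j`, `j ∉ k`, by `(1 + Ỹ_k̃^{±1})^{-b̃_k̃j}` with the original
exponent. Since there are no 2-cycles between orbits, the `b̃_k̃j`, `k̃ ∈ k`, have a common sign, so
after applying `π` all these factors have the same base `1 + Y_k^{±1}` and their product is
`(1 + Y_k^{±1})^{-b_kj}`.
-/
open scoped Classical BigOperators

/-- Fomin–Zelevinsky matrix mutation at the vertex `k`. -/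
noncomputable def matMut {V : Type*} (B : V → V → ℤ) (k : V) : V → V → ℤ :=
  fun i j =>
    if i = k ∨ j = k then -B i j
    else B i j + Int.sign (B i k) * max 0 (B i k * B k j)

/-- Mutation of the tuple of `Y`-variables of a (valued) `Y`-seed at the vertex `k`,
with values in a semifield. -/
noncomputable def yMut {V : Type*} {S : Type*} [Semifield S]
    (B : V → V → ℤ) (Y : V → S) (k : V) : V → S :=
  fun j =>
    if j = k then (Y k)⁻¹
    else if 0 ≤ B k j then Y j * (1 + (Y k)⁻¹) ^ (-(B k j))
    else Y j * (1 + Y k) ^ (-(B k j))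

/-- One mutation step on a `Y`-seed `(B, Y)`. -/
noncomputable def seedMut {V : Type*} {S : Type*} [Semifield S]
    (s : (V → V → ℤ) × (V → S)) (k : V) : (V → V → ℤ) × (V → S) :=
  (matMut s.1 k, yMut s.1 s.2 k)

noncomputable def yFactor {S : Type*} [Semifield S] (b : ℤ) (y : S) : S :=
  if 0 ≤ b then (1 + y⁻¹) ^ (-b) else (1 + y) ^ (-b)

section yFactor

variable {S : Type*} [Semifield S]

lemma yFactor_zero (y : S) : yFactor 0 y = 1 := by
  simp [yFactor]

lemma yFactor_of_nonneg {b : ℤ} (hb : 0 ≤ b) (y : S) :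
    yFactor b y = ((1 + y⁻¹)⁻¹) ^ b := by
  rw [yFactor, if_pos hb, inv_zpow']

lemma yFactor_of_nonpos {b : ℤ} (hb : b ≤ 0) (y : S) : yFactor b y = (1 + y) ^ (-b) := by
  rcases hb.lt_or_eq with hb | rfl
  · rw [yFactor, if_neg hb.not_ge]
  · simp [yFactor]

lemma map_yFactor {T : Type*} [Semifield T] (f : S →+* T) (b : ℤ) (y : S) :
    f (yFactor b y) = yFactor b (f y) := by
  simp only [yFactor, apply_ite f, map_zpow₀, map_add, map_one, map_inv₀]

lemma Finset.prod_zpow_of_nonneg {ι M : Type*} [CommGroupWithZero M] (s : Finset ι) (u : M)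
    (c : ι → ℤ)
    (hc : ∀ i ∈ s, 0 ≤ c i) : ∏ i ∈ s, u ^ c i = u ^ ∑ i ∈ s, c i := by
  induction s using Finset.cons_induction with
  | empty => simp
  | cons a s ha ih =>
    have hs : ∀ i ∈ s, 0 ≤ c i := fun i hi => hc i (Finset.mem_cons_of_mem hi)
    have hsum : 0 ≤ ∑ i ∈ s, c i := Finset.sum_nonneg hs
    rw [Finset.prod_cons, Finset.sum_cons, ih hs, zpow_add']
    have := hc a (Finset.mem_cons_self a s)
    omega

lemma prod_yFactor_of_nonneg_or_nonpos {ι : Type*} (s : Finset ι) (b : ι → ℤ) (y : S)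
    (hb : (∀ i ∈ s, 0 ≤ b i) ∨ ∀ i ∈ s, b i ≤ 0) :
    ∏ i ∈ s, yFactor (b i) y = yFactor (∑ i ∈ s, b i) y := by
  rcases hb with hb | hb
  · rw [Finset.prod_congr rfl fun i hi => yFactor_of_nonneg (hb i hi) y,
      yFactor_of_nonneg (Finset.sum_nonneg hb), Finset.prod_zpow_of_nonneg _ _ _ hb]
  · rw [Finset.prod_congr rfl fun i hi => yFactor_of_nonpos (hb i hi) y,
      yFactor_of_nonpos (Finset.sum_nonpos hb), ← Finset.sum_neg_distrib,
      Finset.prod_zpow_of_nonneg _ _ _ fun i hi => neg_nonneg.2 (hb i hi)]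

end yFactor

section Mutation

variable {V S : Type*} [Semifield S]

lemma yMut_of_ne (B : V → V → ℤ) (Y : V → S) {k j : V} (h : j ≠ k) :
    yMut B Y k j = Y j * yFactor (B k j) (Y k) := by
  rw [yMut, if_neg h, yFactor, mul_ite]

lemma foldl_seedMut_fst (l : List V) (B : V → V → ℤ) (Y : V → S) :
    (l.foldl seedMut (B, Y)).1 = l.foldl matMut B := by
  induction l generalizing B Y with
  | nil => rfl
  | cons a l ih => exact ih _ _

lemma matMut_self (B : V → V → ℤ) (k : V) : matMut B k k = -B k := by
  funext j
  simp [matMut]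

lemma matMut_of_eq_zero (B : V → V → ℤ) {k i : V} (hik : i ≠ k) (h : B i k = 0) :
    matMut B k i = B i := by
  funext j
  by_cases hj : j = k
  · subst hj
    simp [matMut, h]
  · simp [matMut, hik, hj, h]

variable (T : Set V) (B : V → V → ℤ) (hT : ∀ x ∈ T, ∀ y ∈ T, B x y = 0)
include hT

lemma foldl_matMut_row (m : List V) (hm : m.Nodup) (hmT : ∀ x ∈ m, x ∈ T) :
    ∀ z ∈ T, m.foldl matMut B z = if z ∈ m then -B z else B z := by
  induction m using List.reverseRecOn with
  | nil => simp
  | append_singleton m a ih =>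
    rw [List.nodup_append_comm, List.singleton_append, List.nodup_cons] at hm
    obtain ⟨ham, hm⟩ := hm
    have ha : a ∈ T := hmT a (by simp)
    have ih := ih hm fun x hx => hmT x (by simp [hx])
    intro z hz
    rw [List.foldl_append, List.foldl_cons, List.foldl_nil]
    by_cases hza : z = a
    · subst hza
      rw [matMut_self, ih z hz, if_neg ham, if_pos (by simp)]
    · have hzero : m.foldl matMut B z a = 0 := by
        rw [ih z hz]; split_ifs <;> simp [hT z hz a ha]
      rw [matMut_of_eq_zero _ hza hzero, ih z hz]
      simp [hza]

variable {T B} (Y : V → S)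

lemma foldl_seedMut_fst_apply_of_not_mem (m : List V) (hm : m.Nodup) (hmT : ∀ x ∈ m, x ∈ T)
    {a : V} (ha : a ∈ T) (ham : a ∉ m) (j : V) : (m.foldl seedMut (B, Y)).1 a j = B a j := by
  rw [foldl_seedMut_fst, foldl_matMut_row T B hT m hm hmT a ha, if_neg ham]

lemma prod_map_yFactor_eq_one (m : List V) (hmT : ∀ x ∈ m, x ∈ T) {j : V} (hj : j ∈ T) :
    (m.map fun z => yFactor (B z j) (Y z)).prod = 1 :=
  List.prod_eq_one <| by
    simp only [List.mem_map]
    rintro _ ⟨z, hz, rfl⟩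
    rw [hT z (hmT z hz) j hj, yFactor_zero]

lemma foldl_seedMut_snd_of_not_mem (m : List V) (hm : m.Nodup) (hmT : ∀ x ∈ m, x ∈ T)
    {j : V} (hj : j ∉ m) :
    (m.foldl seedMut (B, Y)).2 j = Y j * (m.map fun z => yFactor (B z j) (Y z)).prod := by
  induction m using List.reverseRecOn generalizing j with
  | nil => simp
  | append_singleton m a ih =>
    rw [List.nodup_append_comm, List.singleton_append, List.nodup_cons] at hm
    obtain ⟨ham, hm⟩ := hm
    have ha : a ∈ T := hmT a (by simp)
    have hmT : ∀ x ∈ m, x ∈ T := fun x hx => hmT x (by simp [hx])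
    have hYa : (m.foldl seedMut (B, Y)).2 a = Y a := by
      rw [ih hm hmT ham, prod_map_yFactor_eq_one hT Y m hmT ha, mul_one]
    have hja : j ≠ a := by rintro rfl; simp at hj
    rw [List.foldl_append, List.foldl_cons, List.foldl_nil]
    dsimp only [seedMut]
    rw [yMut_of_ne _ _ hja,
      ih hm hmT fun h => hj (List.mem_append_left _ h),
      foldl_seedMut_fst_apply_of_not_mem hT Y m hm hmT ha ham, hYa,
      List.map_append, List.prod_append, List.map_singleton, List.prod_singleton, mul_assoc]

lemma foldl_seedMut_snd_of_mem_of_not_mem (m : List V) (hm : m.Nodup) (hmT : ∀ x ∈ m, x ∈ T)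
    {j : V} (hjT : j ∈ T) (hjm : j ∉ m) : (m.foldl seedMut (B, Y)).2 j = Y j := by
  rw [foldl_seedMut_snd_of_not_mem hT Y m hm hmT hjm, prod_map_yFactor_eq_one hT Y m hmT hjT,
    mul_one]

lemma foldl_seedMut_snd_of_mem (m : List V) (hm : m.Nodup) (hmT : ∀ x ∈ m, x ∈ T)
    {j : V} (hj : j ∈ m) : (m.foldl seedMut (B, Y)).2 j = (Y j)⁻¹ := by
  induction m using List.reverseRecOn with
  | nil => simp at hj
  | append_singleton m a ih =>
    rw [List.nodup_append_comm, List.singleton_append, List.nodup_cons] at hm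
    obtain ⟨ham, hm⟩ := hm
    have ha : a ∈ T := hmT a (by simp)
    have hmT : ∀ x ∈ m, x ∈ T := fun x hx => hmT x (by simp [hx])
    rw [List.foldl_append, List.foldl_cons, List.foldl_nil]
    dsimp only [seedMut]
    by_cases hja : j = a
    · rw [hja, yMut, if_pos rfl, foldl_seedMut_snd_of_mem_of_not_mem hT Y m hm hmT ha ham]
    · have hjm : j ∈ m := by simpa [hja] using hj
      rw [yMut_of_ne _ _ hja, ih hm hmT hjm,
        foldl_seedMut_fst_apply_of_not_mem hT Y m hm hmT ha ham,
        hT a ha j (hmT j hjm), yFactor_zero, mul_one]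

end Mutation

section Orbit

variable {V G : Type*} [Group G] [MulAction G V] (B : V → V → ℤ)

lemma eq_zero_of_mem_orbit (hnoloop : ∀ x y : V, y ∈ MulAction.orbit G x → B x y = 0)
    (k : V) : ∀ x ∈ MulAction.orbit G k, ∀ y ∈ MulAction.orbit G k, B x y = 0 :=
  fun x hx y hy => hnoloop x y (by rwa [MulAction.orbit_eq_iff.2 hx])

lemma nonneg_or_nonpos_on_orbit
    (hno2cycle : ∀ x y x' y' : V, x' ∈ MulAction.orbit G x → y' ∈ MulAction.orbit G y →
      0 < B x y → 0 ≤ B x' y') (k j : V) :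
    (∀ z ∈ MulAction.orbit G k, 0 ≤ B z j) ∨ ∀ z ∈ MulAction.orbit G k, B z j ≤ 0 := by
  by_cases h : ∃ z ∈ MulAction.orbit G k, 0 < B z j
  · obtain ⟨z, hz, hpos⟩ := h
    exact Or.inl fun z' hz' =>
      hno2cycle z j z' j (by rwa [MulAction.orbit_eq_iff.2 hz]) (MulAction.mem_orbit_self j) hpos
  · exact Or.inr fun z hz => not_lt.1 fun hpos => h ⟨z, hz, hpos⟩

end Orbit

theorem folding_commutes_with_y_seed_mutation_general
    {Vt : Type*} [Fintype Vt]
    {G : Type*} [Group G] [MulAction G Vt]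
    (Bt : Vt → Vt → ℤ)
    -- admissibility of the action on the original quiver:
    (hnoloop : ∀ x y : Vt, y ∈ MulAction.orbit G x → Bt x y = 0)
    (hno2cycle : ∀ x y x' y' : Vt, x' ∈ MulAction.orbit G x → y' ∈ MulAction.orbit G y →
      0 < Bt x y → 0 ≤ Bt x' y')
    (k : Vt) (l : List Vt) (hl : l.Nodup) (hlmem : ∀ x, x ∈ l ↔ x ∈ MulAction.orbit G k)
    {St S : Type*} [Semifield St] [Semifield S] (π : St →+* S)
    (Yt : Vt → St) (Y : Vt → S)
    (hπY : ∀ x, π (Yt x) = Y x)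
    (hYconst : ∀ (g : G) (x : Vt), Y (g • x) = Y x) :
    ∀ j : Vt,
      π ((l.foldl seedMut (Bt, Yt)).2 j) =
        if j ∈ MulAction.orbit G k then (Y k)⁻¹
        else if 0 ≤ ∑ z ∈ Finset.univ.filter (· ∈ MulAction.orbit G k), Bt z j then
          Y j * (1 + (Y k)⁻¹) ^ (-(∑ z ∈ Finset.univ.filter (· ∈ MulAction.orbit G k), Bt z j))
        else Y j * (1 + Y k) ^ (-(∑ z ∈ Finset.univ.filter (· ∈ MulAction.orbit G k), Bt z j)) := by
  intro j
  have hT := eq_zero_of_mem_orbit Bt hnoloop k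
  have hlT : ∀ x ∈ l, x ∈ MulAction.orbit G k := fun x => (hlmem x).1
  have hYk : ∀ z ∈ MulAction.orbit G k, Y z = Y k := by
    rintro z ⟨g, rfl⟩
    exact hYconst g k
  by_cases hj : j ∈ MulAction.orbit G k
  · rw [if_pos hj, foldl_seedMut_snd_of_mem hT Yt l hl hlT ((hlmem j).2 hj), map_inv₀, hπY,
      hYk j hj]
  · have hfilter : Finset.univ.filter (· ∈ MulAction.orbit G k) = l.toFinset := by
      ext x
      simp [hlmem]
    have hsign : (∀ z ∈ l.toFinset, 0 ≤ Bt z j) ∨ ∀ z ∈ l.toFinset, Bt z j ≤ 0 := by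
      simpa only [List.mem_toFinset, hlmem] using nonneg_or_nonpos_on_orbit Bt hno2cycle k j
    rw [if_neg hj, hfilter, foldl_seedMut_snd_of_not_mem hT Yt l hl hlT fun h => hj (hlT j h),
      ← List.prod_toFinset _ hl, map_mul, map_prod, hπY,
      Finset.prod_congr rfl fun z hz => by
        rw [map_yFactor, hπY, hYk z (hlT z (List.mem_toFinset.1 hz))],
      prod_yFactor_of_nonneg_or_nonpos _ _ _ hsign, yFactor, mul_ite]

/-- Mutation commutes with folding for `Y`-seeds.  Let `Q̃` be a quiver (with
skew-symmetric matrix `Bt`) carrying an admissible action of a finite group `G`, let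
`k` be a vertex, and assume the action on the quiver mutated at the orbit of `k` is
still admissible.  Let `π` be a semifield homomorphism sending the upstairs
`Y`-variables `Ỹ` to the orbit-constant downstairs ones `Y`.  Then applying the
mutations `μ_k̃`, `k̃` in the orbit of `k`, upstairs and projecting by `π` agrees with
the valued `Y`-seed mutation of the folded seed at the orbit of `k` (whose exchange
matrix is `b x y = Σ_{z ∈ orbit(x)} Bt z y`). -/
theorem folding_commutes_with_y_seed_mutation
    {Vt : Type*} [Fintype Vt] [DecidableEq Vt]
    {G : Type*} [Group G] [Fintype G] [MulAction G Vt]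
    (Bt : Vt → Vt → ℤ)
    (hskew : ∀ x y, Bt y x = -Bt x y)
    (hinv : ∀ (g : G) (x y : Vt), Bt (g • x) (g • y) = Bt x y)
    -- admissibility of the action on the original quiver:
    (hnoloop : ∀ x y : Vt, y ∈ MulAction.orbit G x → Bt x y = 0)
    (hno2cycle : ∀ x y x' y' : Vt, x' ∈ MulAction.orbit G x → y' ∈ MulAction.orbit G y →
      0 < Bt x y → 0 ≤ Bt x' y')
    (k : Vt) (l : List Vt) (hl : l.Nodup) (hlmem : ∀ x, x ∈ l ↔ x ∈ MulAction.orbit G k)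
    {St S : Type*} [Semifield St] [Semifield S] (π : St →+* S)
    (Yt : Vt → St) (Y : Vt → S)
    (hπY : ∀ x, π (Yt x) = Y x)
    (hYconst : ∀ (g : G) (x : Vt), Y (g • x) = Y x)
    (hYt0 : ∀ x, Yt x ≠ 0) (hY0 : ∀ x, Y x ≠ 0)
    (h1 : 1 + Y k ≠ 0) (h2 : 1 + (Y k)⁻¹ ≠ 0)
    (h1t : ∀ x ∈ MulAction.orbit G k, 1 + Yt x ≠ 0 ∧ 1 + (Yt x)⁻¹ ≠ 0)
    -- admissibility of the action on the mutated quiver: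
    (hnoloop' : ∀ x y : Vt, y ∈ MulAction.orbit G x → (l.foldl seedMut (Bt, Yt)).1 x y = 0)
    (hno2cycle' : ∀ x y x' y' : Vt, x' ∈ MulAction.orbit G x → y' ∈ MulAction.orbit G y →
      0 < (l.foldl seedMut (Bt, Yt)).1 x y → 0 ≤ (l.foldl seedMut (Bt, Yt)).1 x' y') :
    ∀ j : Vt,
      π ((l.foldl seedMut (Bt, Yt)).2 j) =
        if j ∈ MulAction.orbit G k then (Y k)⁻¹
        else if 0 ≤ ∑ z ∈ Finset.univ.filter (· ∈ MulAction.orbit G k), Bt z j then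
          Y j * (1 + (Y k)⁻¹) ^ (-(∑ z ∈ Finset.univ.filter (· ∈ MulAction.orbit G k), Bt z j))
        else Y j * (1 + Y k) ^ (-(∑ z ∈ Finset.univ.filter (· ∈ MulAction.orbit G k), Bt z j)) :=
  folding_commutes_with_y_seed_mutation_general Bt hnoloop hno2cycle k l hl hlmem π Yt Y hπY hYconst
end
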